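/- Let Γ and Γ′ be distance-regular graphs with the same valency k, and let C in Γ and C′ in Γ′ be completely regular codes with the same covering radius ρ, with eigenvalue orderings Spec(C) = {η_0 = k, η_1, …, η_ρ} and Spec(C′) = {η′_0 = k, η′_1, …, η′_ρ}, and associated coefficients λ_i, τ_i and λ′_i, τ′_i respectively (i.e., u(η_1)∘u(η_1) = Σ λ_i u(η_i), u(η_1)∘u(η_1)∘u(η_1) = Σ τ_i u(η_i), and similarly for C′). Suppose η_1 = η′_1 and η_1 is non-degenerate for C, that λ_i = λ′_i and τ_i = τ′_i for all 0 ≤ i ≤ ρ, and that η_i = η′_i whenever λ_i ≠ 0 or τ_i ≠ 0. Then C and C′ have the same intersection numbers: γ_i = γ′_i, α_i = α′_i and β_i = β′_i for all 0 ≤ i ≤ ρ. -/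

import Mathlib

open Finset Matrix

variable {V : Type*}

/-- `G` is a distance-regular graph with valency `k`, diameter `D`,
and intersection numbers `b i`, `c i`. -/
def IsDRG [Fintype V] (G : SimpleGraph V) [DecidableRel G.Adj]
    (k D : ℕ) (b c : ℕ → ℕ) : Prop :=
  G.Connected ∧ (∀ v, G.degree v = k) ∧
    (∀ x y : V, G.dist x y ≤ D) ∧ (∃ x y : V, G.dist x y = D) ∧
    ∀ i ≤ D, ∀ x y : V, G.dist x y = i →
      ((Finset.univ.filter fun z => G.Adj y z ∧ G.dist x z = i - 1).card = c i ∧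
       (Finset.univ.filter fun z => G.Adj y z ∧ G.dist x z = i + 1).card = b i)

/-- the distance from a vertex `v` to the code `C` -/
noncomputable def codeDist (G : SimpleGraph V) (C : Finset V) (v : V) : ℕ :=
  sInf {n | ∃ y ∈ C, G.dist v y = n}

/-- the characteristic vector of a code -/
def charVec [DecidableEq V] (C : Finset V) : V → ℂ :=
  fun v => if v ∈ C then 1 else 0

/-- the characteristic vector of the `i`-th cell `C_i` of the distance partition -/
noncomputable def cellVec (G : SimpleGraph V) (C : Finset V) (i : ℕ) : V → ℂ :=
  fun v => if codeDist G C v = i then 1 else 0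

/-- the `i`-th cell `C_i` of the distance partition, as a finset -/
noncomputable def cellFinset [Fintype V] (G : SimpleGraph V) (C : Finset V) (i : ℕ) : Finset V :=
  Finset.univ.filter fun v => codeDist G C v = i

/-- the number of neighbours of `v` lying in the `j`-th cell `C_j` -/
noncomputable def nbrsInCell [Fintype V] (G : SimpleGraph V) [DecidableRel G.Adj]
    (C : Finset V) (j : ℕ) (v : V) : ℕ :=
  (Finset.univ.filter fun z => G.Adj v z ∧ codeDist G C z = j).card

/-- `C` is a completely regular code with covering radius `ρ` and
intersection numbers `γ i, α i, β i`. -/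
def IsCRC [Fintype V] (G : SimpleGraph V) [DecidableRel G.Adj]
    (C : Finset V) (ρ : ℕ) (γ α β : ℕ → ℕ) : Prop :=
  C.Nonempty ∧ (∀ v, codeDist G C v ≤ ρ) ∧ (∃ v, codeDist G C v = ρ) ∧
    (∀ i, 1 ≤ i → i ≤ ρ → ∀ v, codeDist G C v = i → nbrsInCell G C (i - 1) v = γ i) ∧
    (∀ i ≤ ρ, ∀ v, codeDist G C v = i → nbrsInCell G C i v = α i) ∧
    (∀ i ≤ ρ, ∀ v, codeDist G C v = i → nbrsInCell G C (i + 1) v = β i)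

/-- the outer distribution module `𝔸x` of the code `C`, where `𝔸` is the
Bose-Mesner algebra (the algebra generated by the adjacency matrix) -/
noncomputable def outerModule [Fintype V] [DecidableEq V] (G : SimpleGraph V)
    [DecidableRel G.Adj] (C : Finset V) : Submodule ℂ (V → ℂ) :=
  Submodule.span ℂ {w | ∃ M ∈ Algebra.adjoin ℂ {G.adjMatrix ℂ}, w = M *ᵥ charVec C}

/-- the tridiagonal quotient matrix `U` of a completely regular code -/
def quotientMatrix (F : Type*) [Semiring F] (γ α β : ℕ → ℕ) (ρ : ℕ) :
    Matrix (Fin (ρ + 1)) (Fin (ρ + 1)) F :=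
  Matrix.of fun i j =>
    if (i : ℕ) = (j : ℕ) + 1 then (γ (i : ℕ) : F)
    else if (i : ℕ) = (j : ℕ) then (α (i : ℕ) : F)
    else if (j : ℕ) = (i : ℕ) + 1 then (β (i : ℕ) : F)
    else 0

/-- `θ` lists the distinct eigenvalues of `A` and `E j` is the orthogonal
projection onto the eigenspace of `θ j` (the primitive idempotents). -/
def PrimIdem [Fintype V] [DecidableEq V] (A : Matrix V V ℂ) (D : ℕ)
    (θ : Fin (D + 1) → ℝ) (E : Fin (D + 1) → Matrix V V ℂ) : Prop :=
  Function.Injective θ ∧ (∀ j, E j * E j = E j) ∧ (∀ j, (E j)ᴴ = E j) ∧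
    (∀ j, A * E j = (θ j : ℂ) • E j) ∧ (∑ j, E j = 1) ∧ (∀ j, E j ≠ 0)

/-- `q` are the Krein parameters of the primitive idempotents `E`. -/
def KreinRel [Fintype V] (D : ℕ) (E : Fin (D + 1) → Matrix V V ℂ)
    (q : Fin (D + 1) → Fin (D + 1) → Fin (D + 1) → ℝ) : Prop :=
  ∀ i j, Matrix.hadamard (E i) (E j) = (Fintype.card V : ℂ)⁻¹ • ∑ l, (q i j l : ℂ) • E l

/-- the Krein parameters satisfy the `Q`-polynomial condition with respect to the
given ordering of the primitive idempotents -/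
def QPolyKrein (D : ℕ) (q : Fin (D + 1) → Fin (D + 1) → Fin (D + 1) → ℝ) : Prop :=
  ∀ i j l : Fin (D + 1),
    (¬(((i : ℤ) - (j : ℤ)).natAbs ≤ (l : ℕ) ∧ (l : ℕ) ≤ (i : ℕ) + (j : ℕ)) → q i j l = 0) ∧
    (((l : ℕ) = ((i : ℤ) - (j : ℤ)).natAbs ∨ (l : ℕ) = (i : ℕ) + (j : ℕ)) → q i j l ≠ 0)

/-- a matrix is irreducible tridiagonal if all entries at distance more than one from
the diagonal vanish and all sub- and super-diagonal entries are nonzero -/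
def IrredTridiag {n : ℕ} {F : Type*} [Zero F] (M : Matrix (Fin n) (Fin n) F) : Prop :=
  (∀ i j : Fin n, 1 < (((i : ℕ) : ℤ) - ((j : ℕ) : ℤ)).natAbs → M i j = 0) ∧
  (∀ i j : Fin n, (((i : ℕ) : ℤ) - ((j : ℕ) : ℤ)).natAbs = 1 → M i j ≠ 0)

/-- `C` is a Leonard completely regular code with respect to the (nontrivial)
eigenvalue `θ t`: for some ordering `σ` of the basis `ℬ = {E_j x ≠ 0}` of the outer
distribution module, the matrix representing `y ↦ (E t x) ∘ y` is irreducible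
tridiagonal. -/
def IsLeonardWrt [Fintype V] [DecidableEq V] (D ρ : ℕ)
    (E : Fin (D + 1) → Matrix V V ℂ) (C : Finset V) (t : Fin (D + 1)) : Prop :=
  E t *ᵥ charVec C ≠ 0 ∧
    ∃ σ : Fin (ρ + 1) → Fin (D + 1), Function.Injective σ ∧
      (∀ j : Fin (D + 1), E j *ᵥ charVec C ≠ 0 ↔ j ∈ Set.range σ) ∧
      ∃ M : Matrix (Fin (ρ + 1)) (Fin (ρ + 1)) ℂ, IrredTridiag M ∧
        ∀ j, (E t *ᵥ charVec C) * (E (σ j) *ᵥ charVec C) =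
          ∑ l, M l j • (E (σ l) *ᵥ charVec C)

/-- `C` is a Leonard completely regular code: it is Leonard with respect to some
nontrivial eigenvalue. -/
def IsLeonard [Fintype V] [DecidableEq V] (D ρ : ℕ)
    (E : Fin (D + 1) → Matrix V V ℂ) (C : Finset V) : Prop :=
  ∃ t : Fin (D + 1), t ≠ 0 ∧ IsLeonardWrt D ρ E C t

/-- `C` is a `Q`-polynomial completely regular code with respect to the eigenvalue
`θ t`: there is an ordering `Spec C = {θ 0, θ (σ 1), …, θ (σ ρ)}` with `σ 1 = t`
such that the entrywise `p`-th power of `u = E t x` lies in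
`V_{σ 0} + ⋯ + V_{σ p}` for all `0 ≤ p ≤ ρ`. -/
def IsQPolyCodeWrt [Fintype V] [DecidableEq V] (G : SimpleGraph V) [DecidableRel G.Adj]
    (D ρ : ℕ) (θ : Fin (D + 1) → ℝ) (E : Fin (D + 1) → Matrix V V ℂ)
    (γ α β : ℕ → ℕ) (C : Finset V) (t : Fin (D + 1)) : Prop :=
  ∃ σ : Fin (ρ + 1) → Fin (D + 1), σ 0 = 0 ∧ Function.Injective σ ∧ σ 1 = t ∧
    spectrum ℂ (quotientMatrix ℂ γ α β ρ) = Set.range (fun j => (θ (σ j) : ℂ)) ∧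
    ∀ p : Fin (ρ + 1), (fun v => (E t *ᵥ charVec C) v ^ (p : ℕ)) ∈
      ⨆ (j : Fin (ρ + 1)) (_ : j ≤ p),
        Module.End.eigenspace (Matrix.mulVecLin (G.adjMatrix ℂ)) ((θ (σ j) : ℂ))

/-- `C` is a `Q`-polynomial completely regular code. -/
def IsQPolyCode [Fintype V] [DecidableEq V] (G : SimpleGraph V) [DecidableRel G.Adj]
    (D ρ : ℕ) (θ : Fin (D + 1) → ℝ) (E : Fin (D + 1) → Matrix V V ℂ)
    (γ α β : ℕ → ℕ) (C : Finset V) : Prop :=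
  ∃ t : Fin (D + 1), IsQPolyCodeWrt G D ρ θ E γ α β C t

/-- a translation graph on an abelian group: adjacency is invariant under translation -/
def IsTranslationGraph {X : Type*} [AddCommGroup X] (G : SimpleGraph X) : Prop :=
  ∀ x y z : X, G.Adj x y → G.Adj (x + z) (y + z)

/-- the coset graph of an additive code `C`: cosets `C'` and `C''` are adjacent if
`Γ` has an edge with one end in `C'` and the other in `C''` -/
def cosetGraph {X : Type*} [AddCommGroup X] (G : SimpleGraph X) (C : AddSubgroup X) :
    SimpleGraph (X ⧸ C) where
  Adj a b := a ≠ b ∧ ∃ x y : X,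
    QuotientAddGroup.mk x = a ∧ QuotientAddGroup.mk y = b ∧ G.Adj x y
  symm := ⟨fun a b ⟨hne, x, y, hx, hy, h⟩ => ⟨hne.symm, y, x, hy, hx, h.symm⟩⟩
  loopless := ⟨fun a ⟨hne, _⟩ => hne rfl⟩

/-- `G` is a `Q`-polynomial distance-regular graph: it is distance-regular and
admits an ordering of its primitive idempotents whose Krein parameters satisfy
the `Q`-polynomial condition -/
def IsQPolyDRG {W : Type*} [Fintype W] [DecidableEq W]
    (G : SimpleGraph W) [DecidableRel G.Adj] : Prop :=
  ∃ (k D : ℕ) (b c : ℕ → ℕ), IsDRG G k D b c ∧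
    ∃ (θ : Fin (D + 1) → ℝ) (E : Fin (D + 1) → Matrix W W ℂ)
      (q : Fin (D + 1) → Fin (D + 1) → Fin (D + 1) → ℝ),
      θ 0 = k ∧ PrimIdem (G.adjMatrix ℂ) D θ E ∧ KreinRel D E q ∧ QPolyKrein D q

/-!
Row `m` of the quotient matrix is a weight vector `(γ_m, α_m, β_m)` on the nodes
`w_{m-1}, w_m, w_{m+1}`, where `w = u(η_1)`.  Applying `U` to `1` (its rows sum to `k`), `w`,
`w∘w` and `w∘w∘w`, and expanding the last two in the eigenbasis, shows that the first four
moments of this weighted three-point set are the same for both codes as soon as `w` and the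
eigenvectors `u(η_i)` with `λ_i ≠ 0` or `τ_i ≠ 0` agree in the coordinates `m - 1` and `m`.
Non-degeneracy makes the nodes distinct, so the moments determine the unknown node `w_{m+1}`
and all three weights; the eigenvalue equations in row `m` then carry the agreement of the
eigenvectors to coordinate `m + 1`.
-/

section CodeDist

variable {W : Type*} {G : SimpleGraph W} {C : Finset W}

lemma exists_mem_dist_eq_codeDist (hC : C.Nonempty) (v : W) :
    ∃ y ∈ C, G.dist v y = codeDist G C v :=
  let ⟨y, hy⟩ := hC
  Nat.sInf_mem (s := {n | ∃ y ∈ C, G.dist v y = n}) ⟨_, y, hy, rfl⟩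

lemma codeDist_le_dist {y : W} (hy : y ∈ C) (v : W) : codeDist G C v ≤ G.dist v y :=
  Nat.sInf_le ⟨y, hy, rfl⟩

lemma codeDist_le_of_adj (hG : G.Connected) (hC : C.Nonempty) {a b : W} (h : G.Adj a b) :
    codeDist G C a ≤ codeDist G C b + 1 := by
  obtain ⟨y, hy, hby⟩ := exists_mem_dist_eq_codeDist (G := G) hC b
  have := hG.dist_triangle (u := a) (v := b) (w := y)
  rw [SimpleGraph.dist_eq_one_iff_adj.mpr h] at this
  have := codeDist_le_dist (G := G) hy a
  omega

lemma exists_adj_codeDist_eq (hG : G.Connected) (hC : C.Nonempty) {v : W} {n : ℕ}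
    (hv : codeDist G C v = n + 1) : ∃ w, G.Adj v w ∧ codeDist G C w = n := by
  obtain ⟨y, hy, hvy⟩ := exists_mem_dist_eq_codeDist (G := G) hC v
  obtain ⟨p, hp⟩ := (hG v y).exists_walk_length_eq_dist
  cases p with
  | nil => simp_all
  | @cons _ w _ hvw q =>
    refine ⟨w, hvw, le_antisymm ?_ (by have := codeDist_le_of_adj hG hC hvw; omega)⟩
    have := codeDist_le_dist (G := G) hy w
    have := SimpleGraph.dist_le q
    simp only [SimpleGraph.Walk.length_cons] at hp
    omega

lemma exists_codeDist_eq_of_le (hG : G.Connected) (hC : C.Nonempty) {v : W} {i : ℕ}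
    (hi : i ≤ codeDist G C v) : ∃ w, codeDist G C w = i := by
  induction h : codeDist G C v generalizing v with
  | zero => exact ⟨v, by omega⟩
  | succ n ih =>
    rcases hi.lt_or_eq with hi | hi
    · obtain ⟨w, -, hw⟩ := exists_adj_codeDist_eq hG hC h
      exact ih (by omega) hw
    · exact ⟨v, by omega⟩

variable [Fintype W] [DecidableRel G.Adj]

lemma nbrsInCell_eq_zero (hG : G.Connected) (hC : C.Nonempty) {v : W} {j : ℕ}
    (hj : j + 1 < codeDist G C v ∨ codeDist G C v + 1 < j) : nbrsInCell G C j v = 0 := by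
  refine card_eq_zero.mpr (filter_eq_empty_iff.mpr fun z _ ⟨hvz, hz⟩ => ?_)
  have := codeDist_le_of_adj hG hC hvz
  have := codeDist_le_of_adj hG hC hvz.symm
  omega

namespace IsCRC

variable {ρ : ℕ} {γ α β : ℕ → ℕ}

lemma degree_eq_sum_nbrsInCell (hC : IsCRC G C ρ γ α β) (v : W) :
    G.degree v = ∑ j : Fin (ρ + 1), nbrsInCell G C j v := by
  rw [Fin.sum_univ_eq_sum_range (fun j => nbrsInCell G C j v),
    ← SimpleGraph.card_neighborFinset_eq_degree, SimpleGraph.neighborFinset_eq_filter,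
    card_eq_sum_card_fiberwise (f := codeDist G C)
      fun z _ => mem_range.mpr (Nat.lt_succ_of_le (hC.2.1 z))]
  simp only [filter_filter, nbrsInCell]

lemma exists_codeDist_eq (hG : G.Connected) (hC : IsCRC G C ρ γ α β) {i : ℕ} (hi : i ≤ ρ) :
    ∃ v, codeDist G C v = i :=
  let ⟨_, hv⟩ := hC.2.2.1
  exists_codeDist_eq_of_le hG hC.1 (hv ▸ hi)

lemma quotientMatrix_apply {R : Type*} [Semiring R] (hG : G.Connected)
    (hC : IsCRC G C ρ γ α β) {v : W} {i : Fin (ρ + 1)} (hv : codeDist G C v = i)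
    (j : Fin (ρ + 1)) : quotientMatrix R γ α β ρ i j = nbrsInCell G C j v := by
  obtain ⟨hne, -, -, hγ, hα, hβ⟩ := hC
  simp only [quotientMatrix, of_apply]
  split_ifs with h1 h2 h3
  · rw [← hγ i (by omega) (by omega) v hv, show (j : ℕ) = i - 1 by omega]
  · rw [← hα i (by omega) v hv, h2]
  · rw [← hβ i (by omega) v hv, h3]
  · rw [nbrsInCell_eq_zero hG hne (by omega), Nat.cast_zero]

lemma quotientMatrix_mulVec_one {k D : ℕ} {b c : ℕ → ℕ} (hG : IsDRG G k D b c)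
    (hC : IsCRC G C ρ γ α β) : quotientMatrix ℝ γ α β ρ *ᵥ 1 = (k : ℝ) • 1 := by
  ext i
  obtain ⟨v, hv⟩ := hC.exists_codeDist_eq hG.1 (Nat.le_of_lt_succ i.2)
  simp only [mulVec, dotProduct, Pi.one_apply, mul_one, Pi.smul_apply, smul_eq_mul,
    quotientMatrix_apply hG.1 hC hv, ← Nat.cast_sum, ← hC.degree_eq_sum_nbrsInCell, hG.2.1]

lemma beta_ne_zero (hG : G.Connected) (hC : IsCRC G C ρ γ α β) {m : ℕ} (hm : m < ρ) :
    β m ≠ 0 := by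
  obtain ⟨v, hv⟩ := hC.exists_codeDist_eq hG (Nat.succ_le_of_lt hm)
  obtain ⟨w, hvw, hw⟩ := exists_adj_codeDist_eq hG hC.1 hv
  rw [← hC.2.2.2.2.2 m hm.le w hw, nbrsInCell, ← pos_iff_ne_zero, card_pos]
  exact ⟨v, mem_filter.mpr ⟨mem_univ v, hvw.symm, hv⟩⟩

lemma beta_covering_radius (hC : IsCRC G C ρ γ α β) : β ρ = 0 := by
  obtain ⟨-, hle, ⟨v, hv⟩, -, -, hβ⟩ := hC
  rw [← hβ ρ le_rfl v hv]
  exact card_eq_zero.mpr (filter_eq_empty_iff.mpr fun z _ ⟨_, hz⟩ => by have := hle z; omega)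

end IsCRC

end CodeDist

section QuotientMatrix

variable {R : Type*} [CommSemiring R] {ρ : ℕ} {γ α β : ℕ → ℕ} {f : Fin (ρ + 1) → R}

-- At `m = 0` the index `m - 1` truncates to `0` and carries the weight `0`.
lemma quotientMatrix_mulVec_apply_of_lt {m : ℕ} (hm : m < ρ) :
    (quotientMatrix R γ α β ρ *ᵥ f) ⟨m, by omega⟩ =
      (if m = 0 then 0 else (γ m : R)) * f ⟨m - 1, by omega⟩ + α m * f ⟨m, by omega⟩
        + β m * f ⟨m + 1, by omega⟩ := by
  have hrow : ∀ j : Fin (ρ + 1), quotientMatrix R γ α β ρ ⟨m, by omega⟩ j =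
      (if j = ⟨m - 1, by omega⟩ then (if m = 0 then 0 else (γ m : R)) else 0)
        + (if j = ⟨m, by omega⟩ then (α m : R) else 0)
        + (if j = ⟨m + 1, by omega⟩ then (β m : R) else 0) := by
    intro j
    simp only [quotientMatrix, of_apply, Fin.ext_iff]
    split_ifs <;> first | omega | simp
  simp only [mulVec, dotProduct, hrow, add_mul, ite_mul, zero_mul, sum_add_distrib,
    sum_ite_eq', mem_univ, if_true]

lemma quotientMatrix_mulVec_apply_last :
    (quotientMatrix R γ α β ρ *ᵥ f) (Fin.last ρ) =
      (if ρ = 0 then 0 else (γ ρ : R)) * f ⟨ρ - 1, by omega⟩ + α ρ * f (Fin.last ρ) := by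
  have hrow : ∀ j : Fin (ρ + 1), quotientMatrix R γ α β ρ (Fin.last ρ) j =
      (if j = ⟨ρ - 1, by omega⟩ then (if ρ = 0 then 0 else (γ ρ : R)) else 0)
        + (if j = Fin.last ρ then (α ρ : R) else 0) := by
    intro j
    simp only [quotientMatrix, of_apply, Fin.ext_iff, Fin.val_last]
    split_ifs <;> first | omega | simp
  simp only [mulVec, dotProduct, hrow, add_mul, ite_mul, zero_mul, sum_add_distrib,
    sum_ite_eq', mem_univ, if_true]

end QuotientMatrix

lemma weights_eq_of_two_moments {a b g al g' al' : ℝ}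
    (h0 : g + al = g' + al') (h1 : g * a + al * b = g' * a + al' * b) (hab : a ≠ b) :
    g = g' ∧ al = al' := by
  have hg : (g - g') * (a - b) = 0 := by linear_combination h1 - b * h0
  have := (mul_eq_zero.mp hg).resolve_right (sub_ne_zero.mpr hab)
  constructor <;> linarith

lemma node_weight_eq_of_four_moments {a b x x' g al be g' al' be' : ℝ}
    (h0 : g + al + be = g' + al' + be')
    (h1 : g * a + al * b + be * x = g' * a + al' * b + be' * x')
    (h2 : g * (a * a) + al * (b * b) + be * (x * x)
        = g' * (a * a) + al' * (b * b) + be' * (x' * x'))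
    (h3 : g * (a * a * a) + al * (b * b * b) + be * (x * x * x)
        = g' * (a * a * a) + al' * (b * b * b) + be' * (x' * x' * x'))
    (hax : a ≠ x) (hbx : b ≠ x) (hbe : be ≠ 0) :
    x = x' ∧ be = be' := by
  have hxa : x - a ≠ 0 := sub_ne_zero.mpr hax.symm
  have hxb : x - b ≠ 0 := sub_ne_zero.mpr hbx.symm
  -- pair both weight vectors with `(t - a) (t - b) (t - x')`, which vanishes at the primed nodes
  have hcubic : be * (x - a) * (x - b) * (x - x') = 0 := by
    linear_combination h3 - (a + b + x') * h2 + (a * b + a * x' + b * x') * h1 - a * b * x' * h0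
  have hx : x = x' := by
    simpa [hbe, hxa, hxb, sub_eq_zero] using hcubic
  subst hx
  have hquadratic : (be - be') * (x - a) * (x - b) = 0 := by
    linear_combination h2 - (a + b) * h1 + a * b * h0
  exact ⟨rfl, by simpa [hxa, hxb, sub_eq_zero] using hquadratic⟩

def CommonEigenvectorsAgreeAt {ι κ : Type*} (η η' : ι → ℝ) (u u' : ι → κ → ℝ) (i : κ) : Prop :=
  ∀ j, η j = η' j → u j i = u' j i

lemma mulVec_sum_smul_apply_eq {ι n : Type*} [Fintype ι] [Fintype n] {M M' : Matrix n n ℝ}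
    {η η' : ι → ℝ} {u u' : ι → n → ℝ} (hu : ∀ j, M *ᵥ u j = η j • u j)
    (hu' : ∀ j, M' *ᵥ u' j = η' j • u' j) {c : ι → ℝ} (hc : ∀ j, c j ≠ 0 → η j = η' j)
    {i : n} (hi : CommonEigenvectorsAgreeAt η η' u u' i) :
    (M *ᵥ ∑ j, c j • u j) i = (M' *ᵥ ∑ j, c j • u' j) i := by
  simp only [mulVec_sum, mulVec_smul, hu, hu', Finset.sum_apply, Pi.smul_apply, smul_eq_mul]
  refine sum_congr rfl fun j _ => ?_
  by_cases hcj : c j = 0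
  · simp [hcj]
  · rw [hc j hcj, hi j (hc j hcj)]

section Comparison

variable {ρ : ℕ} {γ α β γ' α' β' : ℕ → ℕ} {η η' : Fin (ρ + 1) → ℝ}
  {u u' : Fin (ρ + 1) → Fin (ρ + 1) → ℝ}
  (hu : ∀ i, quotientMatrix ℝ γ α β ρ *ᵥ u i = η i • u i)
  (hu' : ∀ i, quotientMatrix ℝ γ' α' β' ρ *ᵥ u' i = η' i • u' i)
include hu hu'

lemma CommonEigenvectorsAgreeAt.succ {m : ℕ} (hm : m < ρ)
    (hγ : m ≠ 0 → γ m = γ' m) (hα : α m = α' m) (hβ : β m = β' m) (hβ0 : β m ≠ 0)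
    (hprev : CommonEigenvectorsAgreeAt η η' u u' ⟨m - 1, by omega⟩)
    (hcur : CommonEigenvectorsAgreeAt η η' u u' ⟨m, by omega⟩) :
    CommonEigenvectorsAgreeAt η η' u u' ⟨m + 1, by omega⟩ := by
  intro j hj
  have e := congrFun (hu j) ⟨m, by omega⟩
  have e' := congrFun (hu' j) ⟨m, by omega⟩
  rw [quotientMatrix_mulVec_apply_of_lt hm] at e e'
  simp only [Pi.smul_apply, smul_eq_mul] at e e'
  rw [← hα, ← hβ, ← hj, ← hprev j hj, ← hcur j hj] at e'
  have : (β m : ℝ) * (u j ⟨m + 1, by omega⟩ - u' j ⟨m + 1, by omega⟩) = 0 := by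
    rcases eq_or_ne m 0 with rfl | hm0
    · simp only [if_pos] at e e'
      linear_combination e - e'
    · rw [if_neg hm0] at e e'
      rw [← hγ hm0] at e'
      linear_combination e - e'
  simpa [hβ0, sub_eq_zero] using this

variable {k : ℝ} (hk : quotientMatrix ℝ γ α β ρ *ᵥ 1 = k • 1)
  (hk' : quotientMatrix ℝ γ' α' β' ρ *ᵥ 1 = k • 1) (hη1 : η 1 = η' 1)
  (hnd1 : ∀ (i : ℕ) (h : i < ρ), u 1 ⟨i, by omega⟩ ≠ u 1 ⟨i + 1, by omega⟩)
include hk hk' hη1 hnd1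

lemma gamma_alpha_last_eq
    (hprev : CommonEigenvectorsAgreeAt η η' u u' ⟨ρ - 1, by omega⟩)
    (hcur : CommonEigenvectorsAgreeAt η η' u u' (Fin.last ρ)) :
    (ρ ≠ 0 → γ ρ = γ' ρ) ∧ α ρ = α' ρ := by
  have e0 := congrFun hk (Fin.last ρ)
  have e0' := congrFun hk' (Fin.last ρ)
  have e1 := congrFun (hu 1) (Fin.last ρ)
  have e1' := congrFun (hu' 1) (Fin.last ρ)
  simp only [quotientMatrix_mulVec_apply_last, Pi.smul_apply, Pi.one_apply, smul_eq_mul,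
    mul_one] at e0 e0' e1 e1'
  rw [← hη1, ← hprev 1 hη1, ← hcur 1 hη1] at e1'
  rcases eq_or_ne ρ 0 with rfl | hρ
  · simp only [if_pos, zero_add] at e0 e0'
    exact ⟨fun h => (h rfl).elim, by exact_mod_cast e0.trans e0'.symm⟩
  · simp only [if_neg hρ] at e0 e0' e1 e1'
    obtain ⟨n, rfl⟩ := Nat.exists_eq_add_one_of_ne_zero hρ
    obtain ⟨hγ, hα⟩ := weights_eq_of_two_moments (e0.trans e0'.symm) (e1.trans e1'.symm)
      (hnd1 n n.lt_succ_self)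
    exact ⟨fun _ => by exact_mod_cast hγ, by exact_mod_cast hα⟩

variable {lam tau : Fin (ρ + 1) → ℝ}
  (hlam : u 1 * u 1 = ∑ i, lam i • u i) (htau : u 1 * u 1 * u 1 = ∑ i, tau i • u i)
  (hlam' : u' 1 * u' 1 = ∑ i, lam i • u' i) (htau' : u' 1 * u' 1 * u' 1 = ∑ i, tau i • u' i)
  (hmatch : ∀ i, (lam i ≠ 0 ∨ tau i ≠ 0) → η i = η' i)
  (hnd2 : ∀ (i : ℕ) (h : i + 1 < ρ), u 1 ⟨i, by omega⟩ ≠ u 1 ⟨i + 2, by omega⟩)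
include hlam htau hlam' htau' hmatch hnd2

lemma gamma_alpha_beta_eq_of_lt {m : ℕ} (hm : m < ρ) (hβ0 : β m ≠ 0)
    (hprev : CommonEigenvectorsAgreeAt η η' u u' ⟨m - 1, by omega⟩)
    (hcur : CommonEigenvectorsAgreeAt η η' u u' ⟨m, by omega⟩) :
    (m ≠ 0 → γ m = γ' m) ∧ α m = α' m ∧ β m = β' m := by
  have e0 := congrFun hk ⟨m, by omega⟩
  have e0' := congrFun hk' ⟨m, by omega⟩
  have e1 := congrFun (hu 1) ⟨m, by omega⟩
  have e1' := congrFun (hu' 1) ⟨m, by omega⟩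
  have e2 : (quotientMatrix ℝ γ α β ρ *ᵥ (u 1 * u 1)) ⟨m, by omega⟩ =
      (quotientMatrix ℝ γ' α' β' ρ *ᵥ (u' 1 * u' 1)) ⟨m, by omega⟩ := by
    rw [hlam, hlam']
    exact mulVec_sum_smul_apply_eq hu hu' (fun j hj => hmatch j (Or.inl hj)) hcur
  have e3 : (quotientMatrix ℝ γ α β ρ *ᵥ (u 1 * u 1 * u 1)) ⟨m, by omega⟩ =
      (quotientMatrix ℝ γ' α' β' ρ *ᵥ (u' 1 * u' 1 * u' 1)) ⟨m, by omega⟩ := by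
    rw [htau, htau']
    exact mulVec_sum_smul_apply_eq hu hu' (fun j hj => hmatch j (Or.inr hj)) hcur
  simp only [quotientMatrix_mulVec_apply_of_lt hm, Pi.smul_apply, Pi.one_apply,
    Pi.mul_apply, smul_eq_mul, mul_one] at e0 e0' e1 e1' e2 e3
  rw [← hη1] at e1'
  rw [← hprev 1 hη1, ← hcur 1 hη1] at e1' e2 e3
  have hax : u 1 ⟨m - 1, by omega⟩ ≠ u 1 ⟨m + 1, by omega⟩ := by
    rcases m with _ | n
    · exact hnd1 0 hm
    · exact hnd2 n hm
  obtain ⟨hx, hβ⟩ := node_weight_eq_of_four_moments (e0.trans e0'.symm)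
    (by linear_combination e1 - e1') e2 e3 hax (hnd1 m hm) (by exact_mod_cast hβ0)
  rw [← hx, ← hβ] at e1'
  rw [← hβ] at e0'
  rcases eq_or_ne m 0 with rfl | hm0
  · simp only [if_pos, zero_add] at e0 e0'
    exact ⟨fun h => (h rfl).elim, by exact_mod_cast add_right_cancel (e0.trans e0'.symm),
      by exact_mod_cast hβ⟩
  · obtain ⟨n, rfl⟩ := Nat.exists_eq_add_one_of_ne_zero hm0
    simp only [if_neg hm0, Nat.add_sub_cancel] at e0 e0' e1 e1'
    obtain ⟨hγ, hα⟩ := weights_eq_of_two_moments (add_right_cancel (e0.trans e0'.symm))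
      (add_right_cancel (e1.trans e1'.symm)) (hnd1 n (by omega))
    exact ⟨fun _ => by exact_mod_cast hγ, by exact_mod_cast hα, by exact_mod_cast hβ⟩

variable (hu0 : ∀ i, u i 0 = 1) (hu'0 : ∀ i, u' i 0 = 1) (hβ0 : ∀ m < ρ, β m ≠ 0)
include hu0 hu'0 hβ0

lemma commonEigenvectorsAgreeAt_of_le (m : ℕ) (hm : m ≤ ρ) :
    CommonEigenvectorsAgreeAt η η' u u' ⟨m, by omega⟩ := by
  induction m using Nat.strong_induction_on with
  | _ m ih =>
    rcases m with _ | n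
    · exact fun j _ => (hu0 j).trans (hu'0 j).symm
    · have hprev := ih (n - 1) (by omega) (by omega)
      have hcur := ih n (by omega) (by omega)
      obtain ⟨hγ, hα, hβ⟩ := gamma_alpha_beta_eq_of_lt hu hu' hk hk' hη1 hnd1 hlam htau hlam'
        htau' hmatch hnd2 (by omega) (hβ0 n (by omega)) hprev hcur
      exact hprev.succ hu hu' (by omega) hγ hα hβ (hβ0 n (by omega)) hcur

theorem quotientMatrix_entries_eq :
    (∀ m ≤ ρ, (m ≠ 0 → γ m = γ' m) ∧ α m = α' m) ∧ ∀ m < ρ, β m = β' m := by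
  have hagree := commonEigenvectorsAgreeAt_of_le hu hu' hk hk' hη1 hnd1 hlam htau hlam' htau'
    hmatch hnd2 hu0 hu'0 hβ0
  have hrow {m : ℕ} (hm : m < ρ) := gamma_alpha_beta_eq_of_lt hu hu' hk hk' hη1 hnd1 hlam
    htau hlam' htau' hmatch hnd2 hm (hβ0 m hm) (hagree (m - 1) (by omega)) (hagree m hm.le)
  refine ⟨fun m hm => ?_, fun m hm => (hrow hm).2.2⟩
  rcases hm.lt_or_eq with hm | rfl
  · exact ⟨(hrow hm).1, (hrow hm).2.1⟩
  · exact gamma_alpha_last_eq hu hu' hk hk' hη1 hnd1 (hagree (m - 1) (by omega)) (hagree m le_rfl)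

end Comparison

theorem stmt12 {V : Type*} [Fintype V]
    {V' : Type*} [Fintype V']
    (G : SimpleGraph V) [DecidableRel G.Adj]
    (G' : SimpleGraph V') [DecidableRel G'.Adj]
    (k D D' : ℕ) (b c b' c' : ℕ → ℕ)
    (hG : IsDRG G k D b c) (hG' : IsDRG G' k D' b' c')
    (C : Finset V) (C' : Finset V') (ρ : ℕ)
    (γ α β γ' α' β' : ℕ → ℕ)
    (hC : IsCRC G C ρ γ α β) (hC' : IsCRC G' C' ρ γ' α' β')
    (η η' : Fin (ρ + 1) → ℝ)
    (u u' : Fin (ρ + 1) → Fin (ρ + 1) → ℝ)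
    (hu : ∀ i, quotientMatrix ℝ γ α β ρ *ᵥ u i = η i • u i)
    (hu0 : ∀ i, u i 0 = 1)
    (hu' : ∀ i, quotientMatrix ℝ γ' α' β' ρ *ᵥ u' i = η' i • u' i)
    (hu'0 : ∀ i, u' i 0 = 1)
    (lam tau lam' tau' : Fin (ρ + 1) → ℝ)
    (hlam : u 1 * u 1 = ∑ i, lam i • u i)
    (htau : u 1 * u 1 * u 1 = ∑ i, tau i • u i)
    (hlam' : u' 1 * u' 1 = ∑ i, lam' i • u' i)
    (htau' : u' 1 * u' 1 * u' 1 = ∑ i, tau' i • u' i)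
    (hη1 : η 1 = η' 1)
    (hnd1 : ∀ (i : ℕ) (h : i + 1 ≤ ρ), u 1 ⟨i, by omega⟩ ≠ u 1 ⟨i + 1, by omega⟩)
    (hnd2 : ∀ (i : ℕ) (h : i + 2 ≤ ρ), u 1 ⟨i, by omega⟩ ≠ u 1 ⟨i + 2, by omega⟩)
    (hlameq : ∀ i, lam i = lam' i) (htaueq : ∀ i, tau i = tau' i)
    (hmatch : ∀ i, (lam i ≠ 0 ∨ tau i ≠ 0) → η i = η' i) :
    (∀ i : ℕ, 1 ≤ i → i ≤ ρ → γ i = γ' i) ∧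
      (∀ i ≤ ρ, α i = α' i) ∧ (∀ i ≤ ρ, β i = β' i) := by
  obtain rfl : lam' = lam := (funext hlameq).symm
  obtain rfl : tau' = tau := (funext htaueq).symm
  obtain ⟨hγα, hβ⟩ := quotientMatrix_entries_eq hu hu' (hC.quotientMatrix_mulVec_one hG)
    (hC'.quotientMatrix_mulVec_one hG') hη1 hnd1 hlam htau hlam' htau' hmatch hnd2 hu0 hu'0
    fun _ => hC.beta_ne_zero hG.1
  refine ⟨fun i hi hiρ => (hγα i hiρ).1 (by omega), fun i hi => (hγα i hi).2, fun i hi => ?_⟩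
  rcases hi.lt_or_eq with hi | rfl
  · exact hβ i hi
  · rw [hC.beta_covering_radius, hC'.beta_covering_radius]
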